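/- The invariant measure of the octagon Gauss map is finite: μ_G(ℝ) < ∞, i.e. the density g is Lebesgue-integrable over ℝ. -/

import Mathlib

open MeasureTheory Set

noncomputable section

/-- The density `g` of the invariant measure of the octagon Gauss map:
`g(u) = 1/(1+√2-u) - 1/(3+3√2-u)` for `u ≤ -1-√2`, `g(u) = 1/(1+√2-u)` for
`-1-√2 < u ≤ 1`, `g(u) = 1/(1+2√2-u)` for `1 < u < 1+√2`, and `g(u) = 0` for
`u ≥ 1+√2`. -/
def gdens (u : ℝ) : ℝ :=
  if u ≤ -(1 + Real.sqrt 2) then (1 + Real.sqrt 2 - u)⁻¹ - (3 + 3 * Real.sqrt 2 - u)⁻¹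
  else if u ≤ 1 then (1 + Real.sqrt 2 - u)⁻¹
  else if u < 1 + Real.sqrt 2 then (1 + 2 * Real.sqrt 2 - u)⁻¹
  else 0

/-- The measure `μ_G` with density `g`. -/
def gaussMeasure : Measure ℝ :=
  volume.withDensity fun u => ENNReal.ofReal (gdens u)

/-! The density is dominated by `7 / (1 + u²)`, which is integrable: on the bounded pieces because
`g ≤ 1` there, and on the left tail because the two reciprocals cancel to order `1 / u²`. -/

lemma inv_sub_sub_inv_sub_le {a b u : ℝ} (ha : 1 ≤ a) (hab : a ≤ b) (hu : u ≤ 0) :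
    (a - u)⁻¹ - (b - u)⁻¹ ≤ (b - a) * (1 + u ^ 2)⁻¹ := by
  have hau : 0 < a - u := by linarith
  have hbu : 0 < b - u := by linarith
  have hsq : 1 + u ^ 2 ≤ (a - u) * (b - u) := by nlinarith
  calc (a - u)⁻¹ - (b - u)⁻¹ = (b - a) / ((a - u) * (b - u)) := by
        rw [inv_sub_inv hau.ne' hbu.ne']; ring
    _ ≤ (b - a) / (1 + u ^ 2) := div_le_div_of_nonneg_left (by linarith) (by positivity) hsq
    _ = (b - a) * (1 + u ^ 2)⁻¹ := div_eq_mul_inv _ _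

lemma inv_le_mul_inv_one_add_sq {x u M : ℝ} (hx : 1 ≤ x) (hu : u ^ 2 ≤ M) :
    x⁻¹ ≤ (1 + M) * (1 + u ^ 2)⁻¹ :=
  calc x⁻¹ ≤ 1 := inv_le_one_of_one_le₀ hx
    _ ≤ (1 + M) * (1 + u ^ 2)⁻¹ := by
      rw [← div_eq_mul_inv, one_le_div (by positivity)]; linarith

lemma gdens_le (u : ℝ) : gdens u ≤ 7 * (1 + u ^ 2)⁻¹ := by
  have hsq : Real.sqrt 2 ^ 2 = 2 := Real.sq_sqrt (by norm_num)
  have hs1 : 1 < Real.sqrt 2 := by nlinarith [Real.sqrt_nonneg 2]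
  have hs2 : Real.sqrt 2 < 3 / 2 := by nlinarith [Real.sqrt_nonneg 2]
  unfold gdens
  set s := Real.sqrt 2
  split_ifs with h_tail h_mid h_right
  · calc (1 + s - u)⁻¹ - (3 + 3 * s - u)⁻¹ ≤ (3 + 3 * s - (1 + s)) * (1 + u ^ 2)⁻¹ :=
          inv_sub_sub_inv_sub_le (by linarith) (by linarith) (by linarith)
      _ ≤ 7 * (1 + u ^ 2)⁻¹ := by gcongr; linarith
  · exact (inv_le_mul_inv_one_add_sq (u := u) (M := 6) (by linarith) (by nlinarith)).trans_eq
      (by norm_num)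
  · exact (inv_le_mul_inv_one_add_sq (u := u) (M := 6) (by linarith) (by nlinarith)).trans_eq
      (by norm_num)
  · positivity

/-- The invariant measure of the octagon Gauss map is finite. -/
theorem gaussMeasure_finite : gaussMeasure Set.univ < ⊤ := by
  rw [gaussMeasure, withDensity_apply _ MeasurableSet.univ, setLIntegral_univ]
  calc ∫⁻ u, ENNReal.ofReal (gdens u)
      ≤ ∫⁻ u, ENNReal.ofReal (7 * (1 + u ^ 2)⁻¹) :=
        lintegral_mono fun u => ENNReal.ofReal_le_ofReal (gdens_le u)
    _ < ⊤ := (integrable_inv_one_add_sq.const_mul 7).lintegral_lt_top
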